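/- Let f = √2·χ_{[0]}, where χ_{[0]} is the indicator function of the cylinder [0] of sequences starting with the symbol 0. Then |Kf − f|_∞ = √2 > 1, while ‖[D, π(M_f)]‖ = 1. (In particular, the converse of the implication '|Kf − f|_∞ ≤ 1 ⇒ ‖[D, π(M_f)]‖ ≤ 1' fails.) -/

import Mathlib

open MeasureTheory ContinuousLinearMap
open scoped RealInnerProductSpace InnerProductSpace ENNReal

noncomputable section

/-- The shift space `Ω = {0,1}^ℕ`, with `false` playing the role of the symbol `0`
and `true` of the symbol `1`. -/
abbrev Ω : Type := ℕ → Bool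

/-- The shift map `σ`, `σ(x)ₙ = x_{n+1}`. -/
def shiftMap : Ω → Ω := fun x n => x (n + 1)

/-- Prepending a symbol: `consSeq a x = ax`. -/
def consSeq (a : Bool) (x : Ω) : Ω := fun n => Nat.casesOn n a (fun k => x k)

/-- The cylinder set `[w]` of sequences beginning with the finite word `w`. -/
def cylinder (w : List Bool) : Set Ω := {x | ∀ i : Fin w.length, x (i : ℕ) = w.get i}

/-- The Hilbert space `L²(μ)` (real). -/
abbrev E (μ : Measure Ω) := Lp (α := Ω) ℝ 2 μ

/-- The Hilbert space `H = L²(μ) × L²(μ)` with the norm `√(‖φ‖² + ‖ψ‖²)`. -/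
abbrev HS (μ : Measure Ω) := WithLp 2 (E μ × E μ)

variable {μ : Measure Ω}

/-- The diagonal block operator `(φ, ψ) ↦ (A₁φ, A₂ψ)` on `H`. -/
def blockDiag (A₁ A₂ : E μ →L[ℝ] E μ) : HS μ →L[ℝ] HS μ :=
  ((WithLp.prodContinuousLinearEquiv 2 ℝ (E μ) (E μ)).symm.toContinuousLinearMap).comp
    (((A₁.comp (ContinuousLinearMap.fst ℝ (E μ) (E μ))).prod
        (A₂.comp (ContinuousLinearMap.snd ℝ (E μ) (E μ)))).comp
      (WithLp.prodContinuousLinearEquiv 2 ℝ (E μ) (E μ)).toContinuousLinearMap)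

/-- The antidiagonal block operator `(φ, ψ) ↦ (A₁ψ, A₂φ)` on `H`. -/
def blockAntidiag (A₁ A₂ : E μ →L[ℝ] E μ) : HS μ →L[ℝ] HS μ :=
  ((WithLp.prodContinuousLinearEquiv 2 ℝ (E μ) (E μ)).symm.toContinuousLinearMap).comp
    (((A₁.comp (ContinuousLinearMap.snd ℝ (E μ) (E μ))).prod
        (A₂.comp (ContinuousLinearMap.fst ℝ (E μ) (E μ)))).comp
      (WithLp.prodContinuousLinearEquiv 2 ℝ (E μ) (E μ)).toContinuousLinearMap)

/-- The diagonal representation `π(A)(φ,ψ) = (Aφ, Aψ)`. -/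
def diagRep (A : E μ →L[ℝ] E μ) : HS μ →L[ℝ] HS μ := blockDiag A A

/-- The Dirac operator `D(φ,ψ) = (Kψ, Lφ)` associated with the pair `(K, L)`. -/
def dirac (K L : E μ →L[ℝ] E μ) : HS μ →L[ℝ] HS μ := blockAntidiag K L

/-- The commutator `[D, π(A)]`. -/
def commD (K L A : E μ →L[ℝ] E μ) : HS μ →L[ℝ] HS μ :=
  (dirac K L).comp (diagRep A) - (diagRep A).comp (dirac K L)

/-- The rank-one orthogonal projection onto the span of the unit vector `ψ`:
`φ ↦ ⟪ψ, φ⟫ • ψ`. -/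
def rankOneProj (ψ : E μ) : E μ →L[ℝ] E μ := (innerSL ℝ ψ).smulRight ψ

/-- The Haar-basis element `e_w = 2^{ℓ(w)/2} (χ_{[w1]} - χ_{[w0]})`, as a function on `Ω`. -/
def haarFun (w : List Bool) : Ω → ℝ := fun x =>
  (2 : ℝ) ^ ((w.length : ℝ) / 2) *
    ((cylinder (w ++ [true])).indicator 1 x - (cylinder (w ++ [false])).indicator 1 x)

lemma continuous_shiftMap : Continuous shiftMap :=
  continuous_pi fun n => continuous_apply (n + 1)

lemma continuous_consSeq (a : Bool) : Continuous (consSeq a) := by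
  apply continuous_pi
  intro n
  cases n with
  | zero => exact continuous_const
  | succ k => exact continuous_apply k

/-- The Koopman operator on continuous functions: `f ↦ f ∘ σ`. -/
def koopmanC (f : C(Ω, ℝ)) : C(Ω, ℝ) := f.comp ⟨shiftMap, continuous_shiftMap⟩

/-- The Ruelle operator on continuous functions: `(Lf)(x) = (f(0x) + f(1x))/2`. -/
def ruelleC (f : C(Ω, ℝ)) : C(Ω, ℝ) :=
  ⟨fun x => (f (consSeq false x) + f (consSeq true x)) / 2,
    ((f.continuous.comp (continuous_consSeq false)).add
      (f.continuous.comp (continuous_consSeq true))).div_const 2⟩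

end
section

/-- The continuous function `f = √2 · χ_{[0]}`. -/
noncomputable def sqrtTwoChi : C(Ω, ℝ) :=
  ⟨fun x => Real.sqrt 2 * (cylinder [false]).indicator 1 x, by
    have h : (fun x : Ω => Real.sqrt 2 * (cylinder [false]).indicator 1 x)
        = fun x : Ω => (fun b : Bool => if b = false then Real.sqrt 2 else 0) (x 0) := by
      funext x
      by_cases hx : x 0 = false
      · have hmem : x ∈ cylinder [false] := by
          intro i
          fin_cases i
          simpa using hx
        simp [Set.indicator_of_mem hmem, hx]
      · have hmem : x ∉ cylinder [false] := by
          intro hmem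
          exact hx (by simpa using hmem ⟨0, by norm_num⟩)
        simp [Set.indicator_of_notMem hmem, hx]
    rw [h]
    exact Continuous.comp (continuous_of_discreteTopology (f := fun b : Bool => if b = false then Real.sqrt 2 else 0)) (continuous_apply 0)⟩

end

/-!
The commutator `[D, π(M_f)]` is the antidiagonal block operator with entries `B = K M_f - M_f K`
and `L M_f - M_f L = -B*` (as `L = K*` and `M_f` is self-adjoint), so its norm is `‖B‖`.
Pointwise `B g = (f ∘ σ - f) · (g ∘ σ)`, and `|f ∘ σ - f|²` is `2` where `x₀ ≠ x₁` and `0`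
elsewhere. Under `μ` the first symbol `x₀` is a fair coin independent of `σ x`, so `‖B g‖² = ‖g‖²`:
`B` is an isometry and `‖B‖ = 1`. The sup norm `√2` of `f ∘ σ - f` is attained at `10^∞`.
-/

lemma cylinder_nil : _root_.cylinder [] = Set.univ := by
  ext x; simp [_root_.cylinder]

lemma cylinder_cons (a : Bool) (w : List Bool) :
    _root_.cylinder (a :: w) = {x | x 0 = a} ∩ shiftMap ⁻¹' _root_.cylinder w := by
  ext x
  simp [_root_.cylinder, Fin.forall_fin_succ, shiftMap]

lemma measurable_shiftMap : Measurable shiftMap :=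
  measurable_pi_lambda _ fun n => measurable_pi_apply (n + 1)

lemma measurableSet_head (b : Bool) : MeasurableSet {x : Ω | x 0 = b} :=
  measurableSet_eq_fun (measurable_pi_apply 0) measurable_const

lemma measurableSet_cylinder (w : List Bool) : MeasurableSet (_root_.cylinder w) := by
  induction w with
  | nil => simp [cylinder_nil]
  | cons a w ih =>
    rw [cylinder_cons]
    exact (measurableSet_head a).inter (measurable_shiftMap ih)

lemma preimage_shiftMap_cylinder (w : List Bool) :
    shiftMap ⁻¹' _root_.cylinder w =
      _root_.cylinder (false :: w) ∪ _root_.cylinder (true :: w) := by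
  ext x
  rw [cylinder_cons, cylinder_cons]
  cases h : x 0 <;> simp [h]

lemma cylinder_inter_cylinder (w w' : List Bool)
    (h : (_root_.cylinder w ∩ _root_.cylinder w').Nonempty) :
    ∃ v, _root_.cylinder w ∩ _root_.cylinder w' = _root_.cylinder v := by
  induction w generalizing w' with
  | nil => exact ⟨w', by rw [cylinder_nil, Set.univ_inter]⟩
  | cons a w ih =>
    cases w' with
    | nil => exact ⟨a :: w, by rw [cylinder_nil, Set.inter_univ]⟩
    | cons a' w' =>
      obtain ⟨x, hx, hx'⟩ := h
      rw [cylinder_cons] at hx hx'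
      obtain rfl : a = a' := hx.1.symm.trans hx'.1
      obtain ⟨v, hv⟩ := ih w' ⟨shiftMap x, hx.2, hx'.2⟩
      refine ⟨a :: v, ?_⟩
      rw [cylinder_cons, cylinder_cons, cylinder_cons, ← hv, Set.preimage_inter]
      ext; simp only [Set.mem_inter_iff]; tauto

lemma isPiSystem_range_cylinder : IsPiSystem (Set.range _root_.cylinder) := by
  rintro _ ⟨w, rfl⟩ _ ⟨w', rfl⟩ h
  obtain ⟨v, hv⟩ := cylinder_inter_cylinder w w' h
  exact ⟨v, hv.symm⟩

lemma shiftMap_iterate_apply_zero (n : ℕ) (x : Ω) : shiftMap^[n] x 0 = x n := by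
  induction n generalizing x with
  | zero => rfl
  | succ n ih => rw [Function.iterate_succ_apply, ih]; rfl

lemma generateFrom_range_cylinder :
    MeasurableSpace.generateFrom (Set.range _root_.cylinder) = MeasurableSpace.pi := by
  set m := MeasurableSpace.generateFrom (Set.range _root_.cylinder)
  refine le_antisymm (MeasurableSpace.generateFrom_le ?_) ?_
  · rintro _ ⟨w, rfl⟩
    exact measurableSet_cylinder w
  have hcyl : ∀ w, MeasurableSet[m] (_root_.cylinder w) := fun w =>
    MeasurableSpace.measurableSet_generateFrom ⟨w, rfl⟩
  have hshift : Measurable[m, m] shiftMap := by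
    refine measurable_generateFrom ?_
    rintro _ ⟨w, rfl⟩
    rw [preimage_shiftMap_cylinder]
    exact (hcyl _).union (hcyl _)
  have hhead : Measurable[m] fun x : Ω => x 0 := by
    refine measurable_to_countable' fun b => ?_
    have : (fun x : Ω => x 0) ⁻¹' {b} = _root_.cylinder [b] := by
      rw [cylinder_cons, cylinder_nil]; ext; simp
    exact this ▸ hcyl [b]
  have hid : Measurable[m, MeasurableSpace.pi] id := measurable_pi_iff.2 fun n => by
    simp_rw [id, ← shiftMap_iterate_apply_zero n]
    exact hhead.comp (hshift.iterate n)
  simpa using hid.comap_le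

lemma ext_of_cylinder {μ ν : Measure Ω} [IsFiniteMeasure μ] [IsFiniteMeasure ν]
    (h : ∀ w, μ (_root_.cylinder w) = ν (_root_.cylinder w)) : μ = ν :=
  ext_of_generate_finite _ generateFrom_range_cylinder.symm isPiSystem_range_cylinder
    (by rintro _ ⟨w, rfl⟩; exact h w) (by simpa [cylinder_nil] using h [])

lemma restrict_head_false_add_restrict_head_true (μ : Measure Ω) :
    μ.restrict {x | x 0 = false} + μ.restrict {x | x 0 = true} = μ := by
  have hcompl : {x : Ω | x 0 = false}ᶜ = {x | x 0 = true} := by ext; simp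
  rw [← hcompl, Measure.restrict_add_restrict_compl (measurableSet_head false)]

def IsUniformBernoulli (μ : Measure Ω) : Prop :=
  ∀ w : List Bool, μ (_root_.cylinder w) = (1 / 2) ^ w.length

namespace IsUniformBernoulli

variable {μ : Measure Ω} [IsFiniteMeasure μ] (hμ : IsUniformBernoulli μ)
include hμ

lemma measurePreserving_shiftMap_restrict (b : Bool) :
    MeasurePreserving shiftMap (μ.restrict {x | x 0 = b}) ((2⁻¹ : ℝ≥0∞) • μ) := by
  have := μ.smul_finite (ENNReal.inv_ne_top.2 two_ne_zero)
  refine ⟨measurable_shiftMap, ext_of_cylinder fun w => ?_⟩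
  rw [Measure.map_apply measurable_shiftMap (measurableSet_cylinder w),
    Measure.restrict_apply (measurable_shiftMap (measurableSet_cylinder w)), Set.inter_comm,
    ← cylinder_cons, Measure.smul_apply, hμ, hμ, List.length_cons, pow_succ', smul_eq_mul, one_div]

lemma measurePreserving_shiftMap : MeasurePreserving shiftMap μ μ := by
  refine ⟨measurable_shiftMap, ?_⟩
  conv_lhs => rw [← restrict_head_false_add_restrict_head_true μ]
  rw [Measure.map_add _ _ measurable_shiftMap,
    (hμ.measurePreserving_shiftMap_restrict false).map_eq,
    (hμ.measurePreserving_shiftMap_restrict true).map_eq, ← add_smul,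
    ENNReal.inv_two_add_inv_two, one_smul]

lemma integral_comp_head_shiftMap (F : Bool → Ω → ℝ) (hF : ∀ b, Integrable (F b) μ) :
    ∫ x, F (x 0) (shiftMap x) ∂μ = (∫ y, F false y ∂μ + ∫ y, F true y ∂μ) / 2 := by
  have hhead (b : Bool) : (fun x => F (x 0) (shiftMap x)) =ᵐ[μ.restrict {x | x 0 = b}]
      fun x => F b (shiftMap x) :=
    (ae_restrict_iff' (measurableSet_head b)).2 <|
      .of_forall fun x (hx : x 0 = b) => by simp only [hx]
  have hint (b : Bool) : Integrable (fun x => F (x 0) (shiftMap x)) (μ.restrict {x | x 0 = b}) :=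
    ((hμ.measurePreserving_shiftMap_restrict b).integrable_comp_of_integrable
      ((hF b).smul_measure (by simp))).congr (hhead b).symm
  have hpiece (b : Bool) :
      ∫ x in {x | x 0 = b}, F (x 0) (shiftMap x) ∂μ = 2⁻¹ * ∫ y, F b y ∂μ := by
    have hmp := hμ.measurePreserving_shiftMap_restrict b
    rw [integral_congr_ae (hhead b), ← integral_map measurable_shiftMap.aemeasurable
      (hmp.map_eq ▸ (hF b).1.smul_measure _), hmp.map_eq, integral_smul_measure]
    simp
  conv_lhs => rw [← restrict_head_false_add_restrict_head_true μ]
  rw [integral_add_measure (hint false) (hint true), hpiece, hpiece]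
  ring

end IsUniformBernoulli

lemma norm_eq_one_of_forall_norm_apply_eq {𝕜 F : Type*} [NontriviallyNormedField 𝕜]
    [NormedAddCommGroup F] [NormedSpace 𝕜 F] [Nontrivial F] (T : F →L[𝕜] F)
    (hT : ∀ x, ‖T x‖ = ‖x‖) : ‖T‖ = 1 :=
  LinearIsometry.norm_toContinuousLinearMap ⟨T.toLinearMap, hT⟩

lemma norm_adjoint_comp_sub_comp_adjoint {𝕜 F : Type*} [RCLike 𝕜] [NormedAddCommGroup F]
    [InnerProductSpace 𝕜 F] [CompleteSpace F] (K A : F →L[𝕜] F) (hA : IsSelfAdjoint A) :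
    ‖adjoint K ∘L A - A ∘L adjoint K‖ = ‖K ∘L A - A ∘L K‖ := by
  have h : adjoint (K ∘L A - A ∘L K) = -(adjoint K ∘L A - A ∘L adjoint K) := by
    rw [map_sub, adjoint_comp, adjoint_comp, hA.adjoint_eq, neg_sub]
  rw [← norm_neg, ← h, LinearIsometryEquiv.norm_map]

lemma isSelfAdjoint_of_coeFn_eq_mul {α : Type*} [MeasurableSpace α] {ν : Measure α} (φ : α → ℝ)
    (A : Lp ℝ 2 ν →L[ℝ] Lp ℝ 2 ν) (hA : ∀ g : Lp ℝ 2 ν, A g =ᵐ[ν] fun x => φ x * g x) :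
    IsSelfAdjoint A := by
  refine (ContinuousLinearMap.isSelfAdjoint_iff_isSymmetric).2 fun g h => ?_
  rw [L2.inner_def, L2.inner_def]
  refine integral_congr_ae ?_
  filter_upwards [hA g, hA h] with x hg hh
  simp only [RCLike.inner_apply, conj_trivial, coe_coe, hg, hh]
  ring

lemma norm_sq_eq_integral_sq {α : Type*} [MeasurableSpace α] {ν : Measure α} (g : Lp ℝ 2 ν) :
    ‖g‖ ^ 2 = ∫ x, g x ^ 2 ∂ν := by
  rw [← real_inner_self_eq_norm_sq, L2.inner_def]
  simp [sq]

section Blocks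

variable {μ : Measure Ω}

lemma commD_eq_blockAntidiag (K L A : E μ →L[ℝ] E μ) :
    commD K L A = blockAntidiag (K ∘L A - A ∘L K) (L ∘L A - A ∘L L) :=
  rfl

lemma norm_blockAntidiag (A₁ A₂ : E μ →L[ℝ] E μ) :
    ‖blockAntidiag A₁ A₂‖ = max ‖A₁‖ ‖A₂‖ := by
  have happly (x : HS μ) : blockAntidiag A₁ A₂ x = WithLp.toLp 2 (A₁ x.snd, A₂ x.fst) := rfl
  refine le_antisymm (opNorm_le_bound _ (by positivity) fun x => ?_) (max_le ?_ ?_)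
  · refine le_of_sq_le_sq ?_ (by positivity)
    rw [happly, mul_pow, WithLp.prod_norm_sq_eq_of_L2, WithLp.prod_norm_sq_eq_of_L2]
    simp only [WithLp.toLp_fst, WithLp.toLp_snd]
    have h₁ := A₁.le_of_opNorm_le (le_max_left ‖A₁‖ ‖A₂‖) x.snd
    have h₂ := A₂.le_of_opNorm_le (le_max_right ‖A₁‖ ‖A₂‖) x.fst
    nlinarith [norm_nonneg (A₁ x.snd), norm_nonneg (A₂ x.fst)]
  · refine opNorm_le_bound _ (norm_nonneg _) fun ψ => ?_
    simpa [happly] using (blockAntidiag A₁ A₂).le_opNorm (WithLp.toLp 2 (0, ψ))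
  · refine opNorm_le_bound _ (norm_nonneg _) fun φ => ?_
    simpa [happly] using (blockAntidiag A₁ A₂).le_opNorm (WithLp.toLp 2 (φ, 0))

end Blocks

lemma coeFn_comp_sub_comp_of_koopman_of_mul {α : Type*} [MeasurableSpace α] {ν : Measure α}
    {T : α → α} (hT : Measure.QuasiMeasurePreserving T ν ν) (φ : α → ℝ)
    (K A : Lp ℝ 2 ν →L[ℝ] Lp ℝ 2 ν) (hK : ∀ g : Lp ℝ 2 ν, K g =ᵐ[ν] fun x => g (T x))
    (hA : ∀ g : Lp ℝ 2 ν, A g =ᵐ[ν] fun x => φ x * g x) (g : Lp ℝ 2 ν) :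
    (K ∘L A - A ∘L K) g =ᵐ[ν] fun x => (φ (T x) - φ x) * g (T x) := by
  filter_upwards [Lp.coeFn_sub (K (A g)) (A (K g)), hK (A g), hT.ae_eq_comp (hA g), hA (K g),
    hK g] with x hsub hKA hAT hAK hKg
  simp only [comp_apply, sub_apply, Pi.sub_apply, Function.comp_apply] at hsub hAT ⊢
  rw [hsub, hKA, hAT, hAK, hKg]
  ring

lemma sqrtTwoChi_apply (x : Ω) : sqrtTwoChi x = if x 0 = false then √2 else 0 := by
  have : x ∈ _root_.cylinder [false] ↔ x 0 = false := by simp [cylinder_cons, cylinder_nil]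
  change √2 * (_root_.cylinder [false]).indicator 1 x = _
  by_cases h : x 0 = false <;> simp [Set.indicator, this, h]

lemma abs_sqrtTwoChi_shiftMap_sub (x : Ω) :
    |sqrtTwoChi (shiftMap x) - sqrtTwoChi x| = if x 1 = x 0 then 0 else √2 := by
  rw [sqrtTwoChi_apply, sqrtTwoChi_apply, show shiftMap x 0 = x 1 from rfl]
  cases x 0 <;> cases x 1 <;> simp

lemma norm_koopmanC_sqrtTwoChi_sub : ‖koopmanC sqrtTwoChi - sqrtTwoChi‖ = √2 := by
  have happly (x : Ω) : ‖(koopmanC sqrtTwoChi - sqrtTwoChi) x‖ = if x 1 = x 0 then 0 else √2 :=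
    abs_sqrtTwoChi_shiftMap_sub x
  refine le_antisymm ((ContinuousMap.norm_le _ (by positivity)).2 fun x => ?_) ?_
  · rw [happly]
    split_ifs <;> simp
  · have := (koopmanC sqrtTwoChi - sqrtTwoChi).norm_coe_le_norm fun n => decide (n = 0)
    rwa [happly, if_neg (by decide)] at this

namespace IsUniformBernoulli

variable {μ : Measure Ω} [IsFiniteMeasure μ] (hμ : IsUniformBernoulli μ)
include hμ

lemma integral_sqrtTwoChi_shiftMap_sub_mul_sq (g : Ω → ℝ)
    (hg : Integrable (fun x => g x ^ 2) μ) :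
    ∫ x, ((sqrtTwoChi (shiftMap x) - sqrtTwoChi x) * g (shiftMap x)) ^ 2 ∂μ = ∫ x, g x ^ 2 ∂μ := by
  set F : Bool → Ω → ℝ := fun b => {y | y 0 ≠ b}.indicator fun y => 2 * g y ^ 2
  have hF (x : Ω) : ((sqrtTwoChi (shiftMap x) - sqrtTwoChi x) * g (shiftMap x)) ^ 2
      = F (x 0) (shiftMap x) := by
    rw [mul_pow, ← sq_abs, abs_sqrtTwoChi_shiftMap_sub]
    by_cases h : x 1 = x 0 <;> simp [F, shiftMap, h]
  have hFsum (y : Ω) : F false y + F true y = 2 * g y ^ 2 := by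
    cases h : y 0 <;> simp [F, h]
  have hFint (b : Bool) : Integrable (F b) μ :=
    (hg.const_mul 2).indicator (measurableSet_head b).compl
  simp_rw [hF]
  rw [hμ.integral_comp_head_shiftMap F hFint, ← integral_add (hFint false) (hFint true)]
  simp_rw [hFsum, integral_const_mul]
  ring

lemma norm_commutator_koopman_sqrtTwoChi_apply (K Mf : E μ →L[ℝ] E μ)
    (hK : ∀ g : E μ, (K g : Ω → ℝ) =ᵐ[μ] fun x => g (shiftMap x))
    (hMf : ∀ g : E μ, (Mf g : Ω → ℝ) =ᵐ[μ] fun x => sqrtTwoChi x * g x) (g : E μ) :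
    ‖(K ∘L Mf - Mf ∘L K) g‖ = ‖g‖ := by
  have hcomm := coeFn_comp_sub_comp_of_koopman_of_mul
    hμ.measurePreserving_shiftMap.quasiMeasurePreserving sqrtTwoChi K Mf hK hMf g
  refine (pow_left_inj₀ (norm_nonneg _) (norm_nonneg _) two_ne_zero).1 ?_
  rw [norm_sq_eq_integral_sq, norm_sq_eq_integral_sq,
    integral_congr_ae (hcomm.mono fun x hx => by rw [hx])]
  exact hμ.integral_sqrtTwoChi_shiftMap_sub_mul_sq g (Lp.memLp g).integrable_sq

end IsUniformBernoulli

theorem stmt17_general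
    (μ : Measure Ω) [IsProbabilityMeasure μ]
    (hμ : ∀ w : List Bool, μ (cylinder w) = (1 / 2) ^ w.length)
    (K L : E μ →L[ℝ] E μ)
    (hK : ∀ g : E μ, (K g : Ω → ℝ) =ᵐ[μ] fun x => g (shiftMap x))
    (hadj : ContinuousLinearMap.adjoint K = L)
    (Mf : E μ →L[ℝ] E μ)
    (hMf : ∀ g : E μ, (Mf g : Ω → ℝ) =ᵐ[μ] fun x => sqrtTwoChi x * g x) :
    ‖koopmanC sqrtTwoChi - sqrtTwoChi‖ = Real.sqrt 2 ∧
    (1 : ℝ) < Real.sqrt 2 ∧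
    ‖commD K L Mf‖ = 1 := by
  have : Nontrivial (E μ) := nontrivial_of_ne (Lp.const 2 μ (1 : ℝ)) 0 <| by
    rw [← norm_ne_zero_iff, Lp.norm_const'] <;> simp
  have hKMf : ‖K ∘L Mf - Mf ∘L K‖ = 1 := norm_eq_one_of_forall_norm_apply_eq _
    (IsUniformBernoulli.norm_commutator_koopman_sqrtTwoChi_apply hμ K Mf hK hMf)
  have hLMf : ‖L ∘L Mf - Mf ∘L L‖ = 1 := by
    rw [← hadj, norm_adjoint_comp_sub_comp_adjoint _ _ (isSelfAdjoint_of_coeFn_eq_mul _ Mf hMf),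
      hKMf]
  refine ⟨norm_koopmanC_sqrtTwoChi_sub, Real.one_lt_sqrt_two, ?_⟩
  rw [commD_eq_blockAntidiag, norm_blockAntidiag, hKMf, hLMf, max_self]

/-- For `f = √2 χ_{[0]}` one has `|Kf − f|_∞ = √2 > 1` while `‖[D, π(M_f)]‖ = 1`:
the converse of `|Kf − f|_∞ ≤ 1 ⇒ ‖[D, π(M_f)]‖ ≤ 1` fails. -/
theorem stmt17
    (μ : Measure Ω) [IsProbabilityMeasure μ]
    (hμ : ∀ w : List Bool, μ (cylinder w) = (1 / 2) ^ w.length)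
    (K L : E μ →L[ℝ] E μ)
    (hK : ∀ g : E μ, (K g : Ω → ℝ) =ᵐ[μ] fun x => g (shiftMap x))
    (hL : ∀ g : E μ, (L g : Ω → ℝ) =ᵐ[μ]
      fun x => (g (consSeq false x) + g (consSeq true x)) / 2)
    (hadj : ContinuousLinearMap.adjoint K = L)
    (Mf : E μ →L[ℝ] E μ)
    (hMf : ∀ g : E μ, (Mf g : Ω → ℝ) =ᵐ[μ] fun x => sqrtTwoChi x * g x) :
    ‖koopmanC sqrtTwoChi - sqrtTwoChi‖ = Real.sqrt 2 ∧
    (1 : ℝ) < Real.sqrt 2 ∧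
    ‖commD K L Mf‖ = 1 :=
  stmt17_general μ hμ K L hK hadj Mf hMf
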